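/- arXiv:2305.06123 — 2 statements merged into one kernel-verified Lean document; each statement's English description precedes it below -/
import Mathlib

section
/- In a DAG layered into rounds where every vertex in round r + 1 has strong edges to at least ⌊n/2⌋ + 1 vertices of round r (out of at most n vertices per round), if a vertex v in round r₀ is reachable via strong paths from at least ⌊n/2⌋ + 1 vertices of round r₀' ≥ r₀ (a quorum set U in round r₀'), then every vertex in any round r > r₀' has a strong path to v. -/
/-!
Any two majorities of a round with at most `n` vertices intersect. So each vertex of round
`r₀' + 1`, whose strong edges form a majority of round `r₀'`, has a strong edge into `U` and
hence a strong path to `v`. Beyond that round a single strong edge back suffices: by induction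
on the round, it leads to a vertex that already reaches `v`.
-/

open Finset Relation

/-- Strong-path reachability: a (possibly empty) chain of strong edges. -/
def strongPath {V : Type*} [DecidableEq V] (strong : V → Finset V) : V → V → Prop :=
  ReflTransGen fun a b => b ∈ strong a

theorem Finset.inter_nonempty_of_majorities {α : Type*} [DecidableEq α] {s t u : Finset α}
    {n : ℕ} (hs : s ⊆ u) (ht : t ⊆ u) (hu : #u ≤ n) (hsn : n / 2 + 1 ≤ #s)
    (htn : n / 2 + 1 ≤ #t) : (s ∩ t).Nonempty :=
  inter_nonempty_of_card_lt_card_add_card hs ht (by omega)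

theorem strongPath_of_forall_round_eq {V : Type*} [DecidableEq V] {round : V → ℕ}
    {strong : V → Finset V} (hedge : ∀ u v : V, v ∈ strong u → round v + 1 = round u)
    {r : ℕ} {v : V} (hne : ∀ u : V, r < round u → (strong u).Nonempty)
    (hr : ∀ u : V, round u = r → strongPath strong u v) :
    ∀ w : V, r ≤ round w → strongPath strong w v := by
  suffices ∀ m, r ≤ m → ∀ w : V, round w = m → strongPath strong w v from
    fun w hw => this (round w) hw w rfl
  intro m hm
  induction m, hm using Nat.le_induction with
  | base => exact hr
  | succ m hrm ih =>
    intro w hw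
    obtain ⟨x, hx⟩ := hne w (by omega)
    exact .head hx (ih x (by have := hedge w x hx; omega))

theorem all_later_vertices_reach_leader_general
    {V : Type*} [DecidableEq V] [Fintype V] (n : ℕ)
    (round : V → ℕ) (strong : V → Finset V)
    -- strong edges point exactly one round back
    (hedge : ∀ u v : V, v ∈ strong u → round v + 1 = round u)
    -- at most n vertices per round
    (hround : ∀ r : ℕ, (Finset.univ.filter fun w => round w = r).card ≤ n)
    (r₀' : ℕ) (v : V)
    -- every vertex in a round beyond r₀' has at least ⌊n/2⌋+1 strong edges
    (hquorumEdges : ∀ u : V, round u > r₀' → (strong u).card ≥ n / 2 + 1)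
    -- a quorum U of round-r₀' vertices with strong paths to v
    (U : Finset V) (hU : ∀ u ∈ U, round u = r₀') (hUcard : U.card ≥ n / 2 + 1)
    (hUpath : ∀ u ∈ U, strongPath strong u v) :
    ∀ w : V, round w > r₀' → strongPath strong w v := by
  have hnext : ∀ w : V, round w = r₀' + 1 → strongPath strong w v := by
    intro w hw
    have hstrong : strong w ⊆ univ.filter fun x => round x = r₀' := fun x hx => by
      have := hedge w x hx
      simp only [mem_filter, mem_univ, true_and]
      omega
    have hUround : U ⊆ univ.filter fun x => round x = r₀' := fun x hx => by
      simpa using hU x hx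
    obtain ⟨x, hx⟩ := inter_nonempty_of_majorities hstrong hUround (hround r₀')
      (hquorumEdges w (by omega)) hUcard
    exact .head (mem_inter.1 hx).1 (hUpath x (mem_inter.1 hx).2)
  have hne : ∀ u : V, r₀' + 1 < round u → (strong u).Nonempty := fun u hu =>
    card_pos.1 (by have := hquorumEdges u (by omega); omega)
  exact strongPath_of_forall_round_eq hedge hne hnext

theorem all_later_vertices_reach_leader
    {V : Type*} [DecidableEq V] [Fintype V] (n : ℕ)
    (round : V → ℕ) (strong : V → Finset V)
    -- strong edges point exactly one round back
    (hedge : ∀ u v : V, v ∈ strong u → round v + 1 = round u)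
    -- at most n vertices per round
    (hround : ∀ r : ℕ, (Finset.univ.filter fun w => round w = r).card ≤ n)
    (r₀ r₀' : ℕ) (hrr : r₀ ≤ r₀') (v : V) (hv : round v = r₀)
    -- every vertex in a round beyond r₀' has at least ⌊n/2⌋+1 strong edges
    (hquorumEdges : ∀ u : V, round u > r₀' → (strong u).card ≥ n / 2 + 1)
    -- a quorum U of round-r₀' vertices with strong paths to v
    (U : Finset V) (hU : ∀ u ∈ U, round u = r₀') (hUcard : U.card ≥ n / 2 + 1)
    (hUpath : ∀ u ∈ U, strongPath strong u v) :
    ∀ w : V, round w > r₀' → strongPath strong w v :=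
  all_later_vertices_reach_leader_general n round strong hedge hround r₀' v hquorumEdges U hU hUcard
    hUpath
end

section
/- (Common core / get-core) In a layered DAG over rounds 1–4 of a wave, where each round has vertices indexed by a subset of n processes, each vertex of round r + 1 has strong edges to at least ⌊n/2⌋ + 1 distinct vertices of round r, and from round 3 to round 4 every round-4 vertex's strong-edge set intersects any fixed set of size ⌊n/2⌋ + 1 among round-3 vertices, there exist sets V₁ of round-1 vertices and V₄ of round-4 vertices, each of size at least ⌊n/2⌋ + 1, such that every vertex of V₄ has a strong path to every vertex of V₁. -/
open Finset Relation

/-! Every round-3 vertex points to a quorum of round 2, so by double counting some round-2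
vertex `u₂` is pointed to by all but fewer than a quorum of round 3. The quorum of round 3
seen by any round-4 vertex therefore meets the in-neighbourhood of `u₂`, so every round-4
vertex reaches `u₂` and through it the quorum `strong u₂` of round 1. -/

theorem exists_lt_card_filter_mem_add {α β : Type*} [DecidableEq α]
    (A : Finset α) (B : Finset β) (f : β → Finset α) {n q : ℕ}
    (hA : #A ≤ n) (hB : #B ≤ n) (hBne : B.Nonempty) (hq : n < 2 * q)
    (hfA : ∀ b ∈ B, f b ⊆ A) (hfq : ∀ b ∈ B, q ≤ #(f b)) :
    ∃ a ∈ A, #B < #{b ∈ B | a ∈ f b} + q := by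
  have hcount : ∑ a ∈ A, #{b ∈ B | a ∈ f b} = ∑ b ∈ B, #(f b) := by
    rw [← sum_congr rfl fun b hb => congrArg card (filter_mem_eq_inter.trans
      (inter_eq_right.mpr (hfA b hb)))]
    exact sum_card_bipartiteAbove_eq_sum_card_bipartiteBelow _
  have hquorums : #B * q ≤ ∑ b ∈ B, #(f b) := by
    simpa only [sum_const, smul_eq_mul] using sum_le_sum hfq
  apply exists_lt_of_sum_lt
  rw [sum_add_distrib, hcount, sum_const, sum_const, smul_eq_mul, smul_eq_mul]
  have hBpos : 0 < #B := hBne.card_pos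
  -- `2 |A| |B| ≤ n (|A| + |B|) < 2 q (|A| + |B|)`
  nlinarith [Nat.mul_le_mul_right #B hA, Nat.mul_le_mul_left #A hB]

theorem get_core_general
    {V : Type*} [DecidableEq V] [Fintype V] (n : ℕ)
    (round : V → ℕ) (strong : V → Finset V)
    -- each of rounds 1–4 has at most n vertices
    (hround : ∀ r : ℕ, (Finset.univ.filter fun w => round w = r).card ≤ n)
    -- strong edges point exactly one round back
    (hedge : ∀ u v : V, v ∈ strong u → round v + 1 = round u)
    -- each vertex of rounds 2,3,4 has at least ⌊n/2⌋+1 strong edges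
    (hquorumEdges : ∀ u : V, 2 ≤ round u → round u ≤ 4 → (strong u).card ≥ n / 2 + 1)
    -- round 4 contains at least ⌊n/2⌋+1 vertices
    (hfour : (Finset.univ.filter fun w => round w = 4).card ≥ n / 2 + 1) :
    ∃ V₁ V₄ : Finset V,
      (∀ u ∈ V₁, round u = 1) ∧ (∀ u ∈ V₄, round u = 4) ∧
      V₁.card ≥ n / 2 + 1 ∧ V₄.card ≥ n / 2 + 1 ∧
      ∀ v₄ ∈ V₄, ∀ v₁ ∈ V₁, strongPath strong v₄ v₁ := by
  set R : ℕ → Finset V := fun r => univ.filter fun w => round w = r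
  have hmemR {r : ℕ} {w : V} : w ∈ R r ↔ round w = r := by simp [R]
  have hstrong {r : ℕ} {u : V} (hu : u ∈ R (r + 1)) : strong u ⊆ R r := fun v hv =>
    hmemR.mpr (by have := hedge u v hv; have := hmemR.mp hu; omega)
  have hquorum {r : ℕ} {u : V} (hu : u ∈ R r) (h2 : 2 ≤ r) (h4 : r ≤ 4) :
      n / 2 + 1 ≤ #(strong u) :=
    hquorumEdges u (hmemR.mp hu ▸ h2) (hmemR.mp hu ▸ h4)
  obtain ⟨w₄, hw₄⟩ : (R 4).Nonempty := card_pos.mp (Nat.succ_pos _ |>.trans_le hfour)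
  have hR3 : (R 3).Nonempty :=
    (card_pos.mp (Nat.succ_pos _ |>.trans_le (hquorum hw₄ (by norm_num) le_rfl))).mono
      (hstrong hw₄)
  obtain ⟨u₂, hu₂, hfan⟩ := exists_lt_card_filter_mem_add (R 2) (R 3) strong (hround 2)
    (hround 3) hR3 (by omega) (fun b hb => hstrong hb)
    (fun b hb => hquorum hb (by norm_num) (by norm_num))
  refine ⟨strong u₂, R 4, fun v hv => hmemR.mp (hstrong hu₂ hv), fun u hu => hmemR.mp hu,
    hquorum hu₂ le_rfl (by norm_num), hfour, fun v₄ hv₄ v₁ hv₁ => ?_⟩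
  obtain ⟨u₃, hu₃⟩ : (strong v₄ ∩ {b ∈ R 3 | u₂ ∈ strong b}).Nonempty :=
    inter_nonempty_of_card_lt_card_add_card (hstrong hv₄) (filter_subset _ _)
      (by have := hquorum hv₄ (by norm_num) le_rfl; omega)
  rw [mem_inter, mem_filter] at hu₃
  exact .head hu₃.1 (.head hu₃.2.2 (.single hv₁))

theorem get_core
    {V : Type*} [DecidableEq V] [Fintype V] (n : ℕ)
    (round : V → ℕ) (strong : V → Finset V)
    -- each of rounds 1–4 has at most n vertices
    (hround : ∀ r : ℕ, (Finset.univ.filter fun w => round w = r).card ≤ n)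
    -- strong edges point exactly one round back
    (hedge : ∀ u v : V, v ∈ strong u → round v + 1 = round u)
    -- each vertex of rounds 2,3,4 has at least ⌊n/2⌋+1 strong edges
    (hquorumEdges : ∀ u : V, 2 ≤ round u → round u ≤ 4 → (strong u).card ≥ n / 2 + 1)
    -- round 4 contains at least ⌊n/2⌋+1 vertices
    (hfour : (Finset.univ.filter fun w => round w = 4).card ≥ n / 2 + 1)
    -- every round-4 vertex's strong-edge set meets any quorum of round-3 vertices
    (hmeet : ∀ w : V, round w = 4 → ∀ S : Finset V, (∀ u ∈ S, round u = 3) →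
      S.card ≥ n / 2 + 1 → (strong w ∩ S).Nonempty) :
    ∃ V₁ V₄ : Finset V,
      (∀ u ∈ V₁, round u = 1) ∧ (∀ u ∈ V₄, round u = 4) ∧
      V₁.card ≥ n / 2 + 1 ∧ V₄.card ≥ n / 2 + 1 ∧
      ∀ v₄ ∈ V₄, ∀ v₁ ∈ V₁, strongPath strong v₄ v₁ :=
  get_core_general n round strong hround hedge hquorumEdges hfour
end
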